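/- In the setting of the previous statement with data y = Au† + ε for some u† ∈ ℝⁿ and ε ∈ ℝᵐ, the solution admits the representation x(t) = x₀ + (E − (C(t)C₀⁻¹)^{1/α})(u† − x₀) + (C(t)C₀⁻¹)^{1/α} ∫₀ᵗ (C(s)C₀⁻¹)^{1−1/α} ds · C₀AᵀΓ⁻¹ε. -/

import Mathlib

/-!
In the eigenbasis of `C₀AᵀΓ⁻¹A = S diag(μ) S⁻¹` everything decouples. The push-through identity
gives `C(t) = S diag((1 + αtμᵢ)⁻¹) S⁻¹ C₀`, so the coordinates `w = S⁻¹x` solve the scalar linear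
equations `wᵢ' = (bᵢ - μᵢ(wᵢ - uᵢ)) / (1 + αtμᵢ)` with `u = S⁻¹u†` and `b = S⁻¹C₀AᵀΓ⁻¹ε`.
The integrating factor `(1 + αtμᵢ)^(1/α)` has derivative `μᵢ(1 + αtμᵢ)^(1/α - 1)`, so
`(1 + αtμᵢ)^(1/α) (wᵢ - uᵢ) - bᵢ ∫₀ᵗ (1 + αsμᵢ)^(1/α - 1) ds` is constant, which is the
representation read coordinatewise.
-/

open Matrix Set

section Scalar

variable {α μ : ℝ}

theorem hasDerivAt_one_add_mul_rpow_one_div (hα : α ≠ 0) {t : ℝ} (ht : 1 + α * t * μ ≠ 0) :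
    HasDerivAt (fun s => (1 + α * s * μ) ^ (1 / α)) (μ * (1 + α * t * μ) ^ (1 / α - 1)) t := by
  have hc : HasDerivAt (fun s => 1 + α * s * μ) (α * μ) t := by
    simpa using (((hasDerivAt_id t).const_mul α).mul_const μ).const_add 1
  refine (hc.rpow_const (p := 1 / α) (Or.inl ht)).congr_deriv ?_
  field_simp

theorem intervalIntegrable_one_add_mul_rpow {p T : ℝ} (hT : 0 ≤ T)
    (hc : ∀ t ∈ Icc 0 T, 0 < 1 + α * t * μ) :
    IntervalIntegrable (fun s => (1 + α * s * μ) ^ p) MeasureTheory.volume 0 T := by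
  refine ContinuousOn.intervalIntegrable fun s hs => ?_
  rw [uIcc_of_le hT] at hs
  exact ((by fun_prop : Continuous fun r : ℝ => 1 + α * r * μ).continuousAt.rpow_const
    (Or.inl (hc s hs).ne')).continuousWithinAt

theorem hasDerivAt_integral_one_add_mul_rpow {p T : ℝ}
    (hc : ∀ t ∈ Icc 0 T, 0 < 1 + α * t * μ) {t : ℝ} (ht : t ∈ Icc 0 T) :
    HasDerivAt (fun s => ∫ r in (0 : ℝ)..s, (1 + α * r * μ) ^ p) ((1 + α * t * μ) ^ p) t :=
  intervalIntegral.integral_hasDerivAt_right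
    (intervalIntegrable_one_add_mul_rpow ht.1 fun s hs => hc s ⟨hs.1, hs.2.trans ht.2⟩)
    ((by fun_prop : Measurable fun r : ℝ => (1 + α * r * μ) ^ p).stronglyMeasurable
      |>.stronglyMeasurableAtFilter)
    ((by fun_prop : Continuous fun r : ℝ => 1 + α * r * μ).continuousAt.rpow_const
      (Or.inl (hc t ht).ne'))

theorem eq_of_hasDerivAt_linear_ode {u b T : ℝ} {w : ℝ → ℝ} (hα : α ≠ 0) (hT : 0 ≤ T)
    (hc : ∀ t ∈ Icc 0 T, 0 < 1 + α * t * μ)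
    (hw : ∀ t ∈ Icc 0 T, HasDerivAt w ((1 + α * t * μ)⁻¹ * (b - μ * (w t - u))) t) :
    w T = u + (1 + α * T * μ) ^ (-(1 / α)) * (w 0 - u) +
      (1 + α * T * μ) ^ (-(1 / α)) * (∫ s in (0 : ℝ)..T, (1 + α * s * μ) ^ (1 / α - 1)) *
        b := by
  set Φ : ℝ → ℝ := fun t => (1 + α * t * μ) ^ (1 / α)
  set F : ℝ → ℝ := fun t => ∫ s in (0 : ℝ)..t, (1 + α * s * μ) ^ (1 / α - 1)
  have hderiv : ∀ t ∈ Icc 0 T, HasDerivAt (fun t => Φ t * (w t - u) - F t * b) 0 t := by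
    intro t ht
    have hct := (hc t ht).ne'
    refine (((hasDerivAt_one_add_mul_rpow_one_div hα hct).mul ((hw t ht).sub_const u)).sub
      ((hasDerivAt_integral_one_add_mul_rpow hc ht).mul_const b)).congr_deriv ?_
    rw [Real.rpow_sub_one hct]
    field_simp
    ring
  have hconst : Φ T * (w T - u) - F T * b = Φ 0 * (w 0 - u) - F 0 * b :=
    constant_of_has_deriv_right_zero
      (fun t ht => (hderiv t ht).continuousAt.continuousWithinAt)
      (fun t ht => (hderiv t (Ico_subset_Icc_self ht)).hasDerivWithinAt) T ⟨hT, le_rfl⟩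
  have hΦ0 : Φ 0 = 1 := by simp [Φ]
  have hF0 : F 0 = 0 := intervalIntegral.integral_same
  have hΦT : Φ T ≠ 0 := (Real.rpow_pos_of_pos (hc T ⟨hT, le_rfl⟩) _).ne'
  have hsol : w T - u = (Φ T)⁻¹ * (w 0 - u + F T * b) := by
    rw [hΦ0, hF0] at hconst
    rw [eq_inv_mul_iff_mul_eq₀ hΦT]
    linear_combination hconst
  rw [Real.rpow_neg (hc T ⟨hT, le_rfl⟩).le]
  linear_combination hsol

end Scalar

namespace Matrix

variable {ι κ K : Type*} [Fintype ι] [DecidableEq ι] [Fintype κ] [Field K] {S : Matrix ι ι K}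

theorem conj_diagonal_mul_conj_diagonal (hS : IsUnit S.det) (d e : ι → K) :
    S * diagonal d * S⁻¹ * (S * diagonal e * S⁻¹) = S * diagonal (d * e) * S⁻¹ := by
  simp only [Matrix.mul_assoc, nonsing_inv_mul_cancel_left _ _ hS]
  rw [← Matrix.mul_assoc (diagonal d), diagonal_mul_diagonal]
  rfl

theorem inv_conj_diagonal (hS : IsUnit S.det) {d : ι → K} (hd : ∀ i, d i ≠ 0) :
    (S * diagonal d * S⁻¹)⁻¹ = S * diagonal d⁻¹ * S⁻¹ := by
  refine inv_eq_left_inv ?_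
  have : d⁻¹ * d = fun _ => 1 := funext fun i => inv_mul_cancel₀ (hd i)
  rw [conj_diagonal_mul_conj_diagonal hS, this, diagonal_one, Matrix.mul_one,
    mul_nonsing_inv _ hS]

theorem one_add_smul_conj_diagonal (hS : IsUnit S.det) (r : K) (d : ι → K) :
    1 + r • (S * diagonal d * S⁻¹) = S * diagonal (fun i => 1 + r * d i) * S⁻¹ := by
  have : diagonal (fun i => 1 + r * d i) = 1 + r • diagonal d := by
    rw [← diagonal_one, ← diagonal_smul, ← diagonal_add]
    rfl
  rw [this, Matrix.mul_add, Matrix.add_mul, Matrix.mul_one, mul_nonsing_inv _ hS,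
    Matrix.mul_smul, Matrix.smul_mul]

theorem mul_inv_one_add_smul_mul {C : Matrix ι ι K} (hC : IsUnit C.det) (B : Matrix ι ι K)
    (r : K) : C * (1 + r • (B * C))⁻¹ = (1 + r • (C * B))⁻¹ * C := by
  have hconj : 1 + r • (B * C) = C⁻¹ * (1 + r • (C * B)) * C := by
    rw [Matrix.mul_add, Matrix.add_mul, Matrix.mul_one, nonsing_inv_mul _ hC, Matrix.mul_smul,
      Matrix.smul_mul, nonsing_inv_mul_cancel_left _ _ hC]
  rw [hconj, mul_inv_rev, mul_inv_rev, nonsing_inv_nonsing_inv _ hC, ← Matrix.mul_assoc,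
    ← Matrix.mul_assoc, mul_nonsing_inv _ hC, Matrix.one_mul]

theorem mul_inv_one_add_smul_mul_eq_conj_diagonal {C B : Matrix ι ι K} (hC : IsUnit C.det)
    (hS : IsUnit S.det) {μ : ι → K} (hCB : C * B = S * diagonal μ * S⁻¹) {r : K}
    (hr : ∀ i, 1 + r * μ i ≠ 0) :
    C * (1 + r • (B * C))⁻¹ = S * diagonal (fun i => (1 + r * μ i)⁻¹) * S⁻¹ * C := by
  rw [mul_inv_one_add_smul_mul hC, hCB, one_add_smul_conj_diagonal hS, inv_conj_diagonal hS hr]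
  rfl

theorem inv_mulVec_neg_conj_diagonal_mul_mulVec_sub {G : Matrix ι κ K} {A : Matrix κ ι K}
    {μ : ι → K} (hS : IsUnit S.det) (hGA : G * A = S * diagonal μ * S⁻¹) (d v u : ι → K) (ε : κ → K) :
    S⁻¹ *ᵥ -((S * diagonal d * S⁻¹ * G) *ᵥ (A *ᵥ v - (A *ᵥ u + ε))) =
      fun i => d i * ((S⁻¹ *ᵥ (G *ᵥ ε)) i - μ i * ((S⁻¹ *ᵥ v) i - (S⁻¹ *ᵥ u) i)) := by
  have hres : A *ᵥ v - (A *ᵥ u + ε) = A *ᵥ (v - u) - ε := by rw [mulVec_sub]; abel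
  have hSG : S⁻¹ * (S * diagonal d * S⁻¹ * G) = diagonal d * (S⁻¹ * G) := by
    simp only [Matrix.mul_assoc, nonsing_inv_mul_cancel_left _ _ hS]
  have hSGA : diagonal d * (S⁻¹ * G) * A = diagonal d * diagonal μ * S⁻¹ := by
    simp only [Matrix.mul_assoc, hGA, nonsing_inv_mul_cancel_left _ _ hS]
  rw [hres, mulVec_neg, mulVec_mulVec, hSG, mulVec_sub, mulVec_mulVec, hSGA]
  ext i
  simp only [← mulVec_mulVec, mulVec_sub, Pi.neg_apply, Pi.sub_apply, mulVec_diagonal]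
  ring

theorem inv_mulVec_representation (hS : IsUnit S.det) (dp di x₀ u : ι → K) (G : Matrix ι κ K)
    (ε : κ → K) :
    S⁻¹ *ᵥ (x₀ + (1 - S * diagonal dp * S⁻¹) *ᵥ (u - x₀) +
        (S * diagonal dp * S⁻¹ * (S * diagonal di * S⁻¹) * G) *ᵥ ε) =
      fun i => (S⁻¹ *ᵥ x₀) i + (1 - dp i) * ((S⁻¹ *ᵥ u) i - (S⁻¹ *ᵥ x₀) i) +
        dp i * di i * (S⁻¹ *ᵥ (G *ᵥ ε)) i := by
  have hproj : S⁻¹ * (1 - S * diagonal dp * S⁻¹) = (1 - diagonal dp) * S⁻¹ := by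
    rw [Matrix.mul_sub, Matrix.sub_mul, Matrix.mul_one, Matrix.one_mul, Matrix.mul_assoc,
      nonsing_inv_mul_cancel_left _ _ hS]
  have hgain : S⁻¹ * (S * diagonal dp * S⁻¹ * (S * diagonal di * S⁻¹) * G) =
      diagonal dp * diagonal di * (S⁻¹ * G) := by
    simp only [Matrix.mul_assoc, nonsing_inv_mul_cancel_left _ _ hS]
  rw [mulVec_add, mulVec_add, mulVec_mulVec, mulVec_mulVec, hproj, hgain]
  ext i
  simp only [← mulVec_mulVec, sub_mulVec, one_mulVec, mulVec_sub, Pi.add_apply, Pi.sub_apply,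
    mulVec_diagonal]
  ring

end Matrix

section Calculus

variable {ι κ : Type*} [Fintype ι] [Fintype κ]

theorem HasDerivAt.const_mulVec {x : ℝ → ι → ℝ} {x' : ι → ℝ} {t : ℝ} (M : Matrix κ ι ℝ)
    (hx : HasDerivAt x x' t) : HasDerivAt (fun s => M *ᵥ x s) (M *ᵥ x') t :=
  (Matrix.mulVecLin M).toContinuousLinearMap.hasFDerivAt.comp_hasDerivAt t hx

theorem Matrix.integral_mul_diagonal_mul [DecidableEq ι] (S T : Matrix ι ι ℝ)
    {f : ℝ → ι → ℝ} {a b : ℝ}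
    (hf : ∀ i, IntervalIntegrable (fun s => f s i) MeasureTheory.volume a b) :
    (of fun i j => ∫ s in a..b, (S * diagonal (f s) * T) i j) =
      S * diagonal (fun i => ∫ s in a..b, f s i) * T := by
  ext i j
  simp only [of_apply, mul_apply (N := T), mul_diagonal]
  rw [intervalIntegral.integral_finsetSum fun l _ => ((hf l).const_mul _).mul_const _]
  simp only [intervalIntegral.integral_mul_const, intervalIntegral.integral_const_mul]

end Calculus

/-- Spectral power `(C(t)C₀⁻¹)^(-p) = S diag((1+αtμᵢ)^p) S⁻¹`, defined via the
shared diagonalization `C₀AᵀΓ⁻¹A = S diag(μ) S⁻¹`. -/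
noncomputable def specPow {n : ℕ} (S : Matrix (Fin n) (Fin n) ℝ) (μ : Fin n → ℝ)
    (α p t : ℝ) : Matrix (Fin n) (Fin n) ℝ :=
  S * Matrix.diagonal (fun i => (1 + α * t * μ i) ^ (p : ℝ)) * S⁻¹

theorem representation_with_truth_general {n m k : ℕ} (α : ℝ) (hα : 1 ≤ α)
    (C₀ : Matrix (Fin n) (Fin n) ℝ) (hC₀ : C₀.PosDef)
    (A : Matrix (Fin m) (Fin n) ℝ)
    (Γ : Matrix (Fin m) (Fin m) ℝ)
    (udag : Fin n → ℝ) (ε : Fin m → ℝ) (y : Fin m → ℝ)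
    (hy : y = A *ᵥ udag + ε)
    (S : Matrix (Fin n) (Fin n) ℝ) (μ : Fin n → ℝ)
    (hS : IsUnit S.det)
    (hμpos : ∀ i : Fin n, (i : ℕ) < k → 0 < μ i)
    (hμzero : ∀ i : Fin n, k ≤ (i : ℕ) → μ i = 0)
    (hdiag : C₀ * Aᵀ * Γ⁻¹ * A = S * Matrix.diagonal μ * S⁻¹)
    (C : ℝ → Matrix (Fin n) (Fin n) ℝ)
    (hC : ∀ t : ℝ, C t = C₀ * (1 + (α * t) • (Aᵀ * Γ⁻¹ * A * C₀))⁻¹)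
    (x₀ : Fin n → ℝ) (x : ℝ → Fin n → ℝ) (hx0 : x 0 = x₀)
    (hx : ∀ t : ℝ, 0 ≤ t → ∀ i : Fin n,
      HasDerivAt (fun s => x s i)
        (-((C t * Aᵀ * Γ⁻¹) *ᵥ (A *ᵥ x t - y)) i) t) :
    ∀ t : ℝ, 0 ≤ t →
      x t = x₀ + (1 - specPow S μ α (-(1 / α)) t) *ᵥ (udag - x₀) +
        (specPow S μ α (-(1 / α)) t *
          Matrix.of (fun i j => ∫ s in (0:ℝ)..t, specPow S μ α (1 / α - 1) s i j) *
          C₀ * Aᵀ * Γ⁻¹) *ᵥ ε := by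
  intro T hT
  have hα0 : 0 < α := zero_lt_one.trans_le hα
  have hc : ∀ i, ∀ t, 0 ≤ t → 0 < 1 + α * t * μ i := fun i t ht => by
    have : 0 ≤ μ i :=
      (lt_or_ge (i : ℕ) k).elim (fun h => (hμpos i h).le) fun h => (hμzero i h).ge
    positivity
  set u := S⁻¹ *ᵥ udag
  set b := S⁻¹ *ᵥ ((C₀ * Aᵀ * Γ⁻¹) *ᵥ ε)
  have hw : ∀ t, 0 ≤ t → ∀ i, HasDerivAt (fun s => (S⁻¹ *ᵥ x s) i)
      ((1 + α * t * μ i)⁻¹ * (b i - μ i * ((S⁻¹ *ᵥ x t) i - u i))) t := by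
    intro t ht i
    have hCt : C t * Aᵀ * Γ⁻¹ =
        S * diagonal (fun i => (1 + α * t * μ i)⁻¹) * S⁻¹ * (C₀ * Aᵀ * Γ⁻¹) := by
      rw [hC, mul_inv_one_add_smul_mul_eq_conj_diagonal (hC₀.isUnit.map detMonoidHom) hS
        (by simpa only [Matrix.mul_assoc] using hdiag) fun i => (hc i t ht).ne']
      simp only [Matrix.mul_assoc]
    have hxt : HasDerivAt x (-((C t * Aᵀ * Γ⁻¹) *ᵥ (A *ᵥ x t - y))) t :=
      hasDerivAt_pi.2 (hx t ht)
    have := hasDerivAt_pi.1 (hxt.const_mulVec S⁻¹) i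
    rwa [hCt, hy, inv_mulVec_neg_conj_diagonal_mul_mulVec_sub hS hdiag] at this
  have hsol := fun i => eq_of_hasDerivAt_linear_ode hα0.ne' hT (fun t ht => hc i t ht.1)
    fun t ht => hw t ht.1 i
  have hJ : (of fun i j => ∫ s in (0 : ℝ)..T, specPow S μ α (1 / α - 1) s i j) =
      S * diagonal (fun i => ∫ s in (0 : ℝ)..T, (1 + α * s * μ i) ^ (1 / α - 1)) * S⁻¹ :=
    integral_mul_diagonal_mul S S⁻¹ fun i =>
      intervalIntegrable_one_add_mul_rpow hT fun t ht => hc i t ht.1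
  refine mulVec_injective_iff_isUnit.2
    ((isUnit_iff_isUnit_det _).2 (isUnit_nonsing_inv_det S hS)) ?_
  rw [hJ, Matrix.mul_assoc _ Aᵀ, Matrix.mul_assoc _ C₀, ← Matrix.mul_assoc C₀, specPow,
    inv_mulVec_representation hS]
  ext i
  rw [hsol i, hx0]
  ring

theorem representation_with_truth {n m k : ℕ} (hk : k ≤ n) (α : ℝ) (hα : 1 ≤ α)
    (C₀ : Matrix (Fin n) (Fin n) ℝ) (hC₀ : C₀.PosDef)
    (A : Matrix (Fin m) (Fin n) ℝ)
    (Γ : Matrix (Fin m) (Fin m) ℝ) (hΓ : Γ.PosDef)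
    (udag : Fin n → ℝ) (ε : Fin m → ℝ) (y : Fin m → ℝ)
    (hy : y = A *ᵥ udag + ε)
    (S : Matrix (Fin n) (Fin n) ℝ) (μ : Fin n → ℝ)
    (hS : IsUnit S.det)
    (hμpos : ∀ i : Fin n, (i : ℕ) < k → 0 < μ i)
    (hμzero : ∀ i : Fin n, k ≤ (i : ℕ) → μ i = 0)
    (hdiag : C₀ * Aᵀ * Γ⁻¹ * A = S * Matrix.diagonal μ * S⁻¹)
    (C : ℝ → Matrix (Fin n) (Fin n) ℝ)
    (hC : ∀ t : ℝ, C t = C₀ * (1 + (α * t) • (Aᵀ * Γ⁻¹ * A * C₀))⁻¹)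
    (x₀ : Fin n → ℝ) (x : ℝ → Fin n → ℝ) (hx0 : x 0 = x₀)
    (hx : ∀ t : ℝ, 0 ≤ t → ∀ i : Fin n,
      HasDerivAt (fun s => x s i)
        (-((C t * Aᵀ * Γ⁻¹) *ᵥ (A *ᵥ x t - y)) i) t) :
    ∀ t : ℝ, 0 ≤ t →
      x t = x₀ + (1 - specPow S μ α (-(1 / α)) t) *ᵥ (udag - x₀) +
        (specPow S μ α (-(1 / α)) t *
          Matrix.of (fun i j => ∫ s in (0:ℝ)..t, specPow S μ α (1 / α - 1) s i j) *
          C₀ * Aᵀ * Γ⁻¹) *ᵥ ε :=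
  representation_with_truth_general α hα C₀ hC₀ A Γ udag ε y hy S μ hS hμpos hμzero hdiag C hC x₀ x
    hx0 hx
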